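/- Define g(κ) = −1 + κ/(e^κ − 1) − log((e^κ − 1)/(κ e^κ)) for κ > 0. Then g(κ) ≥ 0 for all κ > 0, g(κ) → 0 as κ → 0⁺, and g(κ) → ∞ as κ → ∞. -/

import Mathlib

/-!
Since `g κ = -1 + κ / (exp κ - 1) - log (exp κ - 1) + log κ + κ`, its derivative is
`((exp κ - 1)² - κ² exp κ) / (κ (exp κ - 1)²)`, which is positive because
`exp κ - 1 = 2 exp (κ / 2) sinh (κ / 2)` and `sinh y > y` for `y > 0`. As `(exp κ - 1) / κ → 1`
when `κ → 0⁺`, `g κ → 0` there, so the increasing function `g` is positive on `(0, ∞)`. Finally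
`g κ ≥ log κ - 1`, because `κ / (exp κ - 1) ≥ 0` and `log (exp κ - 1) ≤ κ`.
-/

open Real Filter Set Topology

lemma sq_mul_exp_lt_sq_exp_sub_one {x : ℝ} (hx : x ≠ 0) :
    x ^ 2 * exp x < (exp x - 1) ^ 2 := by
  have hsinh : |x / 2| < |sinh (x / 2)| := by
    rw [abs_sinh]
    exact self_lt_sinh_iff.2 (abs_pos.2 (div_ne_zero hx two_ne_zero))
  have hexp : exp x = exp (x / 2) * exp (x / 2) := by rw [← exp_add, add_halves]
  have hfactor : exp x - 1 = exp (x / 2) * (2 * sinh (x / 2)) := by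
    rw [sinh_eq, hexp, exp_neg]
    field_simp
  calc x ^ 2 * exp x = exp (x / 2) ^ 2 * (2 * (x / 2)) ^ 2 := by rw [hexp]; ring
    _ < exp (x / 2) ^ 2 * (2 * sinh (x / 2)) ^ 2 := by
        gcongr exp (x / 2) ^ 2 * ?_
        rw [mul_pow, mul_pow]
        exact mul_lt_mul_of_pos_left (sq_lt_sq.2 hsinh) (by norm_num)
    _ = (exp x - 1) ^ 2 := by rw [hfactor]; ring

lemma exp_sub_one_pos {x : ℝ} (hx : 0 < x) : 0 < exp x - 1 :=
  sub_pos.2 (one_lt_exp_iff.2 hx)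

lemma StrictMonoOn.lt_of_tendsto_nhdsGT {α β : Type*} [LinearOrder α] [TopologicalSpace α]
    [OrderTopology α] [DenselyOrdered α] [LinearOrder β] [TopologicalSpace β]
    [OrderClosedTopology β] {f : α → β} {a x : α} {L : β} (hf : StrictMonoOn f (Ioi a))
    (hL : Tendsto f (𝓝[>] a) (𝓝 L)) (hx : a < x) : L < f x := by
  obtain ⟨y, hay, hyx⟩ := exists_between hx
  have := nhdsGT_neBot_of_exists_gt ⟨x, hx⟩
  have : ∀ᶠ z in 𝓝[>] a, f z ≤ f y := by
    filter_upwards [Ioo_mem_nhdsGT hay] with z hz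
    exact (hf hz.1 hay hz.2).le
  exact (le_of_tendsto hL this).trans_lt (hf hay hx hyx)

noncomputable def theilLimit (κ : ℝ) : ℝ :=
  -1 + κ / (exp κ - 1) - log ((exp κ - 1) / (κ * exp κ))

lemma theilLimit_eq {κ : ℝ} (hκ : 0 < κ) :
    theilLimit κ = -1 + κ / (exp κ - 1) - log (exp κ - 1) + log κ + κ := by
  rw [theilLimit, log_div (exp_sub_one_pos hκ).ne' (by positivity), log_mul hκ.ne' (exp_ne_zero κ),
    log_exp]
  ring

lemma hasDerivAt_theilLimit {κ : ℝ} (hκ : 0 < κ) :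
    HasDerivAt theilLimit
      (((exp κ - 1) ^ 2 - κ ^ 2 * exp κ) / (κ * (exp κ - 1) ^ 2)) κ := by
  have hne : exp κ - 1 ≠ 0 := (exp_sub_one_pos hκ).ne'
  have hsub := (hasDerivAt_exp κ).sub_const 1
  have h := (((((hasDerivAt_id κ).div hsub hne).const_add (-1)).sub (hsub.log hne)).add
    (hasDerivAt_log hκ.ne')).add (hasDerivAt_id κ)
  refine (h.congr_of_eventuallyEq ?_).congr_deriv ?_
  · filter_upwards [Ioi_mem_nhds hκ] with x hx
    simp only [theilLimit_eq hx, Pi.add_apply, Pi.sub_apply, Pi.div_apply, id]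
  · simp only [id]
    field_simp
    ring

lemma strictMonoOn_theilLimit : StrictMonoOn theilLimit (Ioi 0) := by
  refine strictMonoOn_of_deriv_pos (convex_Ioi 0)
    (fun x hx => (hasDerivAt_theilLimit hx).continuousAt.continuousWithinAt) fun x hx => ?_
  rw [interior_Ioi] at hx
  rw [(hasDerivAt_theilLimit hx).deriv]
  have hnum := sq_mul_exp_lt_sq_exp_sub_one hx.ne'
  exact div_pos (by linarith) (mul_pos hx (pow_pos (exp_sub_one_pos hx) 2))

lemma tendsto_theilLimit_nhdsGT_zero : Tendsto theilLimit (𝓝[>] 0) (𝓝 0) := by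
  have hslope : Tendsto (fun κ => (exp κ - 1) / κ) (𝓝[>] 0) (𝓝 1) := by
    simpa [inv_mul_eq_div] using (hasDerivAt_exp 0).tendsto_slope_zero_right
  have hexp : Tendsto exp (𝓝[>] 0) (𝓝 1) := by
    simpa using (continuous_exp.tendsto 0).mono_left nhdsWithin_le_nhds
  have h := ((hslope.inv₀ one_ne_zero).const_add (-1)).sub
    ((hslope.div hexp one_ne_zero).log (by norm_num))
  norm_num at h
  refine h.congr fun κ => ?_
  rw [theilLimit, div_div]

lemma log_sub_one_le_theilLimit {κ : ℝ} (hκ : 0 < κ) : log κ - 1 ≤ theilLimit κ := by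
  have hpos := exp_sub_one_pos hκ
  have hlog : log (exp κ - 1) ≤ κ := by
    simpa using log_le_log hpos (sub_le_self (exp κ) zero_le_one)
  have : 0 ≤ κ / (exp κ - 1) := by positivity
  rw [theilLimit_eq hκ]
  linarith

lemma tendsto_theilLimit_atTop : Tendsto theilLimit atTop atTop :=
  tendsto_atTop_mono' _ (eventually_gt_atTop 0 |>.mono fun _ => log_sub_one_le_theilLimit)
    (tendsto_atTop_add_const_right _ (-1) tendsto_log_atTop)

theorem stmt_9 :
    (∀ κ : ℝ, 0 < κ →
      0 ≤ -1 + κ / (Real.exp κ - 1) -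
        Real.log ((Real.exp κ - 1) / (κ * Real.exp κ))) ∧
    Filter.Tendsto
      (fun κ : ℝ => -1 + κ / (Real.exp κ - 1) -
        Real.log ((Real.exp κ - 1) / (κ * Real.exp κ)))
      (nhdsWithin 0 (Set.Ioi 0)) (nhds 0) ∧
    Filter.Tendsto
      (fun κ : ℝ => -1 + κ / (Real.exp κ - 1) -
        Real.log ((Real.exp κ - 1) / (κ * Real.exp κ)))
      Filter.atTop Filter.atTop :=
  ⟨fun _ hκ => (strictMonoOn_theilLimit.lt_of_tendsto_nhdsGT tendsto_theilLimit_nhdsGT_zero hκ).le,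
    tendsto_theilLimit_nhdsGT_zero, tendsto_theilLimit_atTop⟩
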